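/- (Hodge decomposition) Let V_0, …, V_n be a cochain complex of finite-dimensional real inner product spaces with coboundary maps δ_p, adjoint coboundary operators δ*_p, and Laplacians Δ_p. Then V_p is the internal orthogonal direct sum of the three subspaces Im δ_{p−1}, Ker Δ_p, and Im δ*_{p+1}: these subspaces are pairwise orthogonal and their sum is all of V_p. -/

import Mathlib

/-!
Harmonic elements are exactly those killed by both `δ*_p` and `δ_p`, since
`⟪Δ_p x, x⟫ = ‖δ*_p x‖² + ‖δ_p x‖²`. As the kernel of an operator is the orthogonal complement
of the range of its adjoint, `Ker Δ_p = (Im δ_{p−1} ⊔ Im δ*_{p+1})ᗮ`, so in finite dimensions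
`V_p = Im δ_{p−1} ⊔ Im δ*_{p+1} ⊔ Ker Δ_p`. Finally `Im δ_{p−1} ⊆ Ker δ_p = (Im δ*_{p+1})ᗮ`
because `δ_p ∘ δ_{p−1} = 0`.
-/

open scoped RealInnerProductSpace
open LinearMap Submodule

section

variable {E F G : Type*}
  [NormedAddCommGroup E] [InnerProductSpace ℝ E]
  [NormedAddCommGroup F] [InnerProductSpace ℝ F]
  [NormedAddCommGroup G] [InnerProductSpace ℝ G]

theorem orthogonal_range_eq_ker_of_inner_map_eq {d : E →ₗ[ℝ] F} {d' : F →ₗ[ℝ] E}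
    (h : ∀ σ τ, ⟪d σ, τ⟫ = ⟪σ, d' τ⟫) : (range d)ᗮ = ker d' := by
  ext τ
  simp only [mem_orthogonal, mem_range, forall_exists_index, forall_apply_eq_imp_iff, h, mem_ker]
  exact ⟨fun hτ => ext_inner_left ℝ fun σ => by rw [hτ, inner_zero_right],
    fun hτ σ => by rw [hτ, inner_zero_right]⟩

theorem orthogonal_range_eq_ker_of_inner_map_eq' {d : E →ₗ[ℝ] F} {d' : F →ₗ[ℝ] E}
    (h : ∀ σ τ, ⟪d σ, τ⟫ = ⟪σ, d' τ⟫) : (range d')ᗮ = ker d :=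
  orthogonal_range_eq_ker_of_inner_map_eq fun τ σ => by
    rw [real_inner_comm, ← h, real_inner_comm]

variable {d₀ : E →ₗ[ℝ] F} {d₀' : F →ₗ[ℝ] E} {d₁ : F →ₗ[ℝ] G} {d₁' : G →ₗ[ℝ] F}

theorem inner_laplacian_self (h₀ : ∀ σ τ, ⟪d₀ σ, τ⟫ = ⟪σ, d₀' τ⟫)
    (h₁ : ∀ σ τ, ⟪d₁ σ, τ⟫ = ⟪σ, d₁' τ⟫) (x : F) :
    ⟪(d₀ ∘ₗ d₀' + d₁' ∘ₗ d₁) x, x⟫ = ⟪d₀' x, d₀' x⟫ + ⟪d₁ x, d₁ x⟫ := by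
  rw [LinearMap.add_apply, comp_apply, comp_apply, inner_add_left, h₀, real_inner_comm x, ← h₁]

theorem ker_laplacian_eq_ker_inf_ker (h₀ : ∀ σ τ, ⟪d₀ σ, τ⟫ = ⟪σ, d₀' τ⟫)
    (h₁ : ∀ σ τ, ⟪d₁ σ, τ⟫ = ⟪σ, d₁' τ⟫) :
    ker (d₀ ∘ₗ d₀' + d₁' ∘ₗ d₁) = ker d₀' ⊓ ker d₁ := by
  ext x
  simp only [mem_inf, mem_ker]
  constructor
  · intro hx
    have hsum := inner_laplacian_self h₀ h₁ x
    rw [hx, inner_zero_left, eq_comm,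
      add_eq_zero_iff_of_nonneg real_inner_self_nonneg real_inner_self_nonneg] at hsum
    exact ⟨inner_self_eq_zero.mp hsum.1, inner_self_eq_zero.mp hsum.2⟩
  · rintro ⟨h₀x, h₁x⟩
    simp [h₀x, h₁x]

theorem ker_laplacian_eq_orthogonal (h₀ : ∀ σ τ, ⟪d₀ σ, τ⟫ = ⟪σ, d₀' τ⟫)
    (h₁ : ∀ σ τ, ⟪d₁ σ, τ⟫ = ⟪σ, d₁' τ⟫) :
    ker (d₀ ∘ₗ d₀' + d₁' ∘ₗ d₁) = (range d₀ ⊔ range d₁')ᗮ := by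
  rw [ker_laplacian_eq_ker_inf_ker h₀ h₁, ← inf_orthogonal,
    orthogonal_range_eq_ker_of_inner_map_eq h₀, orthogonal_range_eq_ker_of_inner_map_eq' h₁]

theorem isOrtho_range_range (h₁ : ∀ σ τ, ⟪d₁ σ, τ⟫ = ⟪σ, d₁' τ⟫) (hd : d₁ ∘ₗ d₀ = 0) :
    range d₀ ⟂ range d₁' := by
  rw [isOrtho_iff_le, orthogonal_range_eq_ker_of_inner_map_eq' h₁]
  exact range_le_ker_iff.mpr hd

end

theorem hodge_decomposition_general
    (V : ℕ → Type*)
    [∀ p, NormedAddCommGroup (V p)] [∀ p, InnerProductSpace ℝ (V p)]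
    [∀ p, FiniteDimensional ℝ (V p)]
    (δ : ∀ p, V p →ₗ[ℝ] V (p + 1))
    (hδδ : ∀ p, (δ (p + 1)) ∘ₗ (δ p) = 0)
    (δs : ∀ p, V (p + 1) →ₗ[ℝ] V p)
    (hadj : ∀ (p : ℕ) (σ : V p) (τ : V (p + 1)), ⟪δ p σ, τ⟫ = ⟪σ, δs p τ⟫)
    (Lap : ∀ p, V (p + 1) →ₗ[ℝ] V (p + 1))
    (hLap : ∀ p, Lap p = (δ p) ∘ₗ (δs p) + (δs (p + 1)) ∘ₗ (δ (p + 1)))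
    :
    ∀ p, (∀ x ∈ LinearMap.range (δ p), ∀ y ∈ LinearMap.ker (Lap p), ⟪x, y⟫ = 0) ∧
      (∀ x ∈ LinearMap.range (δ p), ∀ y ∈ LinearMap.range (δs (p + 1)), ⟪x, y⟫ = 0) ∧
      (∀ x ∈ LinearMap.ker (Lap p), ∀ y ∈ LinearMap.range (δs (p + 1)), ⟪x, y⟫ = 0) ∧
      LinearMap.range (δ p) ⊔ LinearMap.ker (Lap p) ⊔ LinearMap.range (δs (p + 1)) = ⊤ := by
  intro p
  have harmonic : ker (Lap p) = (range (δ p) ⊔ range (δs (p + 1)))ᗮ := by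
    rw [hLap]
    exact ker_laplacian_eq_orthogonal (hadj p) (hadj (p + 1))
  simp only [← isOrtho_iff_inner_eq, harmonic]
  refine ⟨(isOrtho_orthogonal_right _).mono_left le_sup_left,
    isOrtho_range_range (hadj (p + 1)) (hδδ p),
    ((isOrtho_orthogonal_right _).mono_left le_sup_right).symm, ?_⟩
  rw [sup_right_comm]
  exact sup_orthogonal_of_hasOrthogonalProjection

/-- **Statement 11 (Hodge decomposition): `V_p` is the internal orthogonal direct sum of `Im δ_{p−1}`, `Ker Δ_p` and `Im δ*_{p+1}`.**

Indexing convention: the Lean space `V (p + 1)` represents the space `V_p` of the complex,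
and `V 0` represents the trivial space `V_{−1}`; spaces with Lean index `≥ n + 2`
represent the trivial spaces `V_q`, `q ≥ n + 1`.  Thus `δ p : V p → V (p+1)` is the
coboundary `δ_{p−1}`, `δs p : V (p+1) → V p` is the adjoint coboundary `δ*_p`, and
`Lap p : V (p+1) → V (p+1)` is the Laplacian `Δ_p = δ_{p−1} ∘ δ*_p + δ*_{p+1} ∘ δ_p`. -/
theorem hodge_decomposition
    (n : ℕ) (V : ℕ → Type*)
    [∀ p, NormedAddCommGroup (V p)] [∀ p, InnerProductSpace ℝ (V p)]
    [∀ p, FiniteDimensional ℝ (V p)]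
    (hbot : Subsingleton (V 0))
    (htop : ∀ p, n + 2 ≤ p → Subsingleton (V p))
    (δ : ∀ p, V p →ₗ[ℝ] V (p + 1))
    (hδδ : ∀ p, (δ (p + 1)) ∘ₗ (δ p) = 0)
    (δs : ∀ p, V (p + 1) →ₗ[ℝ] V p)
    (hadj : ∀ (p : ℕ) (σ : V p) (τ : V (p + 1)), ⟪δ p σ, τ⟫ = ⟪σ, δs p τ⟫)
    (Lap : ∀ p, V (p + 1) →ₗ[ℝ] V (p + 1))
    (hLap : ∀ p, Lap p = (δ p) ∘ₗ (δs p) + (δs (p + 1)) ∘ₗ (δ (p + 1)))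
    :
    ∀ p, (∀ x ∈ LinearMap.range (δ p), ∀ y ∈ LinearMap.ker (Lap p), ⟪x, y⟫ = 0) ∧
      (∀ x ∈ LinearMap.range (δ p), ∀ y ∈ LinearMap.range (δs (p + 1)), ⟪x, y⟫ = 0) ∧
      (∀ x ∈ LinearMap.ker (Lap p), ∀ y ∈ LinearMap.range (δs (p + 1)), ⟪x, y⟫ = 0) ∧
      LinearMap.range (δ p) ⊔ LinearMap.ker (Lap p) ⊔ LinearMap.range (δs (p + 1)) = ⊤ :=
  hodge_decomposition_general V δ hδδ δs hadj Lap hLap
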